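/- If a symplectic matrix φ can be written as a product φ = TS of two linear anti-symplectic involutions T, S, then φ is conjugate within Sp(n) to an element of Sp^R(n): there exists ψ ∈ Sp(n) with ψφψ⁻¹ ∈ Sp^R(n). -/

import Mathlib

open Matrix

noncomputable section

/-- The standard symplectic structure matrix on `ℝ^{2n} = ℝ^n ⊕ ℝ^n`. -/
def J (n : ℕ) : Matrix (Fin n ⊕ Fin n) (Fin n ⊕ Fin n) ℝ :=
  Matrix.fromBlocks 0 1 (-1) 0

/-- The standard symplectic form `ω(v,w) = ⟨v, J w⟩`. -/
def symForm (n : ℕ) (v w : Fin n ⊕ Fin n → ℝ) : ℝ :=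
  v ⬝ᵥ (J n).mulVec w

/-- A matrix is symplectic if it preserves `ω`. -/
def IsSymplectic (n : ℕ) (ψ : Matrix (Fin n ⊕ Fin n) (Fin n ⊕ Fin n) ℝ) : Prop :=
  ∀ v w, symForm n (ψ.mulVec v) (ψ.mulVec w) = symForm n v w

/-- A linear anti-symplectic involution: `S² = 1` and `ω(Sv,Sw) = -ω(v,w)`. -/
def IsAntiSympInv (n : ℕ) (S : Matrix (Fin n ⊕ Fin n) (Fin n ⊕ Fin n) ℝ) : Prop :=
  S * S = 1 ∧ ∀ v w, symForm n (S.mulVec v) (S.mulVec w) = - symForm n v w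

/-- The standard anti-symplectic involution `R = diag(1,-1)`. -/
def Rmat (n : ℕ) : Matrix (Fin n ⊕ Fin n) (Fin n ⊕ Fin n) ℝ :=
  Matrix.fromBlocks 1 0 0 (-1)

/-- A Lagrangian subspace: `n`-dimensional and `ω` vanishes on it. -/
def IsLagrangian (n : ℕ) (L : Submodule ℝ (Fin n ⊕ Fin n → ℝ)) : Prop :=
  Module.finrank ℝ L = n ∧ ∀ v ∈ L, ∀ w ∈ L, symForm n v w = 0

/-! An anti-symplectic involution `S` splits `ℝ^{2n}` into its `±1` eigenspaces. Both are isotropic,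
since there `ω(v, w) = ω(Sv, Sw) = -ω(v, w)`, and they are complementary, so `ω` pairs them
perfectly and each is Lagrangian. A basis of `Fix S` together with its `ω`-dual basis in `Fix (-S)`
is a symplectic basis in which `S` becomes `R`: `S Q = Q R` with `Q` symplectic. Conjugating
`φ = T S` by `Q⁻¹` gives `T' R` with `T' = Q⁻¹ T Q` an involution, and a product of two involutions
`T' R` always satisfies `T' R = R (T' R)⁻¹ R`. -/

open Module

namespace LinearMap.BilinForm

section CommRing

variable {R M : Type*} [CommRing R] [AddCommGroup M] [Module R M] {B : LinearMap.BilinForm R M}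

theorem injective_dualRestrict_comp_flip (hB : B.SeparatingRight) {L L' : Submodule R M}
    (hLL' : Codisjoint L L') (hL' : ∀ x ∈ L', ∀ y ∈ L', B x y = 0) :
    Function.Injective (L.dualRestrict ∘ₗ B.flip ∘ₗ L'.subtype) := by
  rw [← LinearMap.ker_eq_bot, Submodule.eq_bot_iff]
  intro v hv
  have hL : ∀ x ∈ L, B x v = 0 := fun x hx => LinearMap.congr_fun hv ⟨x, hx⟩
  refine Subtype.ext (hB v fun x => ?_)
  obtain ⟨a, ha, c, hc, rfl⟩ := Submodule.mem_sup.1 (hLL'.eq_top ▸ Submodule.mem_top : x ∈ L ⊔ L')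
  rw [LinearMap.map_add₂, hL a ha, hL' c hc v v.2, add_zero]

end CommRing

variable {K V : Type*} [Field K] [AddCommGroup V] [Module K V] [FiniteDimensional K V]
  {B : LinearMap.BilinForm K V} {L L' : Submodule K V}

theorem finrank_eq_of_isCompl_of_isotropic (hB : B.Nondegenerate) (hLL' : IsCompl L L')
    (hL : ∀ x ∈ L, ∀ y ∈ L, B x y = 0) (hL' : ∀ x ∈ L', ∀ y ∈ L', B x y = 0) :
    finrank K L = finrank K L' := by
  have h₁ := LinearMap.finrank_le_finrank_of_injective
    (injective_dualRestrict_comp_flip hB.2 hLL'.codisjoint hL')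
  have h₂ := LinearMap.finrank_le_finrank_of_injective
    (injective_dualRestrict_comp_flip (B := B.flip) (LinearMap.flip_separatingRight.2 hB.1)
      hLL'.symm.codisjoint fun x hx y hy => hL y hy x hx)
  rw [Subspace.dual_finrank_eq] at h₁ h₂
  omega

theorem exists_dual_family_of_isCompl_of_isotropic (hB : B.Nondegenerate) (hLL' : IsCompl L L')
    (hL : ∀ x ∈ L, ∀ y ∈ L, B x y = 0) (hL' : ∀ x ∈ L', ∀ y ∈ L', B x y = 0)
    {ι : Type*} [Fintype ι] [DecidableEq ι] (b : Basis ι K L) :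
    ∃ y : ι → L', ∀ i j, B (b i) (y j) = if i = j then 1 else 0 := by
  have hsurj : Function.Surjective (L.dualRestrict ∘ₗ B.flip ∘ₗ L'.subtype) := by
    refine (LinearMap.injective_iff_surjective_of_finrank_eq_finrank ?_).1
      (injective_dualRestrict_comp_flip hB.2 hLL'.codisjoint hL')
    rw [Subspace.dual_finrank_eq, finrank_eq_of_isCompl_of_isotropic hB hLL' hL hL']
  refine ⟨fun j => (hsurj (b.dualBasis j)).choose, fun i j => ?_⟩
  rw [← b.dualBasis_apply_self]
  exact LinearMap.congr_fun (hsurj (b.dualBasis j)).choose_spec (b i)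

end LinearMap.BilinForm

namespace Module.End

variable {K V : Type*} [Field K] [NeZero (2 : K)] [AddCommGroup V] [Module K V] {f : End K V}

theorem isCompl_eigenspace_one_neg_one (hf : f * f = 1) :
    IsCompl (f.eigenspace 1) (f.eigenspace (-1)) := by
  have hff (v : V) : f (f v) = v := LinearMap.congr_fun hf v
  constructor
  · refine Submodule.disjoint_def.2 fun v hv hv' => ?_
    rw [mem_eigenspace_iff, one_smul] at hv
    rw [mem_eigenspace_iff, neg_one_smul] at hv'
    have h2v : (2 : K) • v = 0 := by
      rw [two_smul]
      nth_rw 1 [← hv]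
      rw [hv', neg_add_cancel]
    exact (smul_eq_zero.1 h2v).resolve_left two_ne_zero
  · rw [codisjoint_iff, Submodule.eq_top_iff']
    intro v
    refine Submodule.mem_sup.2 ⟨(2⁻¹ : K) • (v + f v), ?_, (2⁻¹ : K) • (v - f v), ?_, ?_⟩
    · rw [mem_eigenspace_iff, map_smul, map_add, hff, one_smul, add_comm]
    · rw [mem_eigenspace_iff, map_smul, map_sub, hff, neg_one_smul, ← smul_neg, neg_sub]
    · rw [← smul_add, add_add_sub_cancel, ← two_smul K, inv_smul_smul₀ two_ne_zero]

theorem isotropic_eigenspace_of_map_map_eq_neg {B : LinearMap.BilinForm K V}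
    (hf : ∀ x y, B (f x) (f y) = -B x y) {μ : K} (hμ : μ * μ = 1) :
    ∀ x ∈ f.eigenspace μ, ∀ y ∈ f.eigenspace μ, B x y = 0 := by
  intro x hx y hy
  have h := hf x y
  rw [mem_eigenspace_iff.1 hx, mem_eigenspace_iff.1 hy, LinearMap.map_smul₂, map_smul, smul_smul,
    hμ, one_smul, eq_neg_iff_add_eq_zero, ← two_mul] at h
  exact (mul_eq_zero.1 h).resolve_left two_ne_zero

end Module.End

namespace Matrix

variable {m ι R : Type*} [Fintype m] [CommSemiring R]

theorem of_mul_mul_transpose_of (c : ι → m → R) (A : Matrix m m R) :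
    (of c : Matrix ι m R) * A * (of c)ᵀ = of fun i j => c i ⬝ᵥ A *ᵥ c j := by
  ext i j
  simp only [mul_apply, of_apply, transpose_apply, dotProduct, mulVec, Finset.sum_mul,
    Finset.mul_sum]
  rw [Finset.sum_comm]
  simp only [mul_assoc]

theorem mul_transpose_of_eq_transpose_of_mul_diagonal [Fintype ι] [DecidableEq ι]
    {A : Matrix m m R} {c : ι → m → R} {d : ι → R} (h : ∀ j, A *ᵥ c j = d j • c j) :
    A * (of c)ᵀ = (of c)ᵀ * diagonal d := by
  ext i j
  have hj := congrFun (h j) i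
  simp only [mulVec, dotProduct, Pi.smul_apply, smul_eq_mul] at hj
  rw [mul_diagonal, mul_apply]
  simp only [transpose_apply, of_apply, hj, mul_comm]

variable {K : Type*} [Field K] [DecidableEq m]

theorem conj_nonsing_inv_mul_self_eq_one {A T : Matrix m m K} (hA : IsUnit A.det)
    (hT : T * T = 1) :
    (A⁻¹ * T * A) * (A⁻¹ * T * A) = 1 := by
  simp only [Matrix.mul_assoc]
  rw [mul_nonsing_inv_cancel_left _ _ hA, ← Matrix.mul_assoc T, hT, Matrix.one_mul,
    nonsing_inv_mul _ hA]

theorem mul_eq_mul_inv_mul_of_mul_self_eq_one {A B : Matrix m m K} (hA : A * A = 1)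
    (hB : B * B = 1) : A * B = B * (A * B)⁻¹ * B := by
  have hinv : (A * B)⁻¹ = B * A := inv_eq_left_inv (by
    rw [Matrix.mul_assoc, ← Matrix.mul_assoc A, hA, Matrix.one_mul, hB])
  rw [hinv, ← Matrix.mul_assoc, hB, Matrix.one_mul]

end Matrix

variable {n : ℕ}

theorem J_eq_neg_matrix_J (n : ℕ) : J n = -Matrix.J (Fin n) ℝ := by
  rw [_root_.J, Matrix.J, fromBlocks_neg]
  simp

theorem det_J_ne_zero (n : ℕ) : (J n).det ≠ 0 :=
  det_ne_zero_of_right_inverse (B := -J n) (by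
    rw [Matrix.mul_neg, J_eq_neg_matrix_J, neg_mul_neg, J_squared, neg_neg])

theorem toBilin'_J_apply (v w : Fin n ⊕ Fin n → ℝ) : (J n).toBilin' v w = symForm n v w :=
  toBilin'_apply' _ _ _

theorem nondegenerate_toBilin'_J (n : ℕ) : (J n).toBilin'.Nondegenerate :=
  LinearMap.BilinForm.nondegenerate_toBilin'_iff_det_ne_zero.2 (det_J_ne_zero n)

theorem symForm_comm (v w : Fin n ⊕ Fin n → ℝ) : symForm n v w = -symForm n w v := by
  rw [symForm, symForm, dotProduct_mulVec, ← mulVec_transpose, J_eq_neg_matrix_J, transpose_neg,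
    Matrix.J_transpose, neg_neg, neg_mulVec, dotProduct_neg, neg_neg, dotProduct_comm]

theorem isSymplectic_iff {A : Matrix (Fin n ⊕ Fin n) (Fin n ⊕ Fin n) ℝ} :
    IsSymplectic n A ↔ Aᵀ * J n * A = J n := by
  rw [← toBilin'.injective.eq_iff, ← toBilin'_comp, LinearMap.BilinForm.ext_iff]
  simp only [IsSymplectic, LinearMap.BilinForm.comp_apply, toLin'_apply, toBilin'_J_apply]

theorem isSymplectic_iff_mem_symplecticGroup {A : Matrix (Fin n ⊕ Fin n) (Fin n ⊕ Fin n) ℝ} :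
    IsSymplectic n A ↔ A ∈ symplecticGroup (Fin n) ℝ := by
  rw [isSymplectic_iff, SymplecticGroup.mem_iff', J_eq_neg_matrix_J, Matrix.mul_neg,
    Matrix.neg_mul, neg_inj]

theorem isSymplectic_transpose_of {c : Fin n ⊕ Fin n → Fin n ⊕ Fin n → ℝ}
    (hc : ∀ i j, symForm n (c i) (c j) = J n i j) : IsSymplectic n (of c)ᵀ := by
  rw [isSymplectic_iff, transpose_transpose, of_mul_mul_transpose_of]
  ext i j
  exact hc i j

namespace IsSymplectic

variable {A B : Matrix (Fin n ⊕ Fin n) (Fin n ⊕ Fin n) ℝ}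

theorem mul (hA : IsSymplectic n A) (hB : IsSymplectic n B) : IsSymplectic n (A * B) := by
  intro v w
  rw [← mulVec_mulVec, ← mulVec_mulVec, hA, hB]

theorem isUnit_det (hA : IsSymplectic n A) : IsUnit A.det :=
  SymplecticGroup.symplectic_det (isSymplectic_iff_mem_symplecticGroup.1 hA)

theorem inv (hA : IsSymplectic n A) : IsSymplectic n A⁻¹ := by
  rw [isSymplectic_iff_mem_symplecticGroup] at hA ⊢
  rw [← SymplecticGroup.coe_inv' ⟨A, hA⟩]
  exact Subtype.prop _

end IsSymplectic

theorem Rmat_eq_diagonal (n : ℕ) : Rmat n = diagonal (Sum.elim 1 (-1)) := by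
  ext (i | i) (j | j) <;> by_cases h : i = j <;> simp [Rmat, one_apply, h]

theorem Rmat_mul_Rmat (n : ℕ) : Rmat n * Rmat n = 1 := by
  rw [Rmat_eq_diagonal, diagonal_mul_diagonal, ← diagonal_one]
  congr 1
  ext (i | i) <;> simp

namespace IsAntiSympInv

variable {S : Matrix (Fin n ⊕ Fin n) (Fin n ⊕ Fin n) ℝ}

theorem toLin'_mul_self (hS : IsAntiSympInv n S) : toLin' S * toLin' S = 1 := by
  rw [Module.End.mul_eq_comp, ← toLin'_mul, hS.1, toLin'_one, Module.End.one_eq_id]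

theorem isotropic_eigenspace (hS : IsAntiSympInv n S) {μ : ℝ} (hμ : μ * μ = 1) :
    ∀ v ∈ End.eigenspace (toLin' S) μ, ∀ w ∈ End.eigenspace (toLin' S) μ,
      (J n).toBilin' v w = 0 :=
  End.isotropic_eigenspace_of_map_map_eq_neg
    (fun v w => by simpa only [toLin'_apply, toBilin'_J_apply] using hS.2 v w) hμ

theorem isLagrangian_eigenspace_one (hS : IsAntiSympInv n S) :
    IsLagrangian n (End.eigenspace (toLin' S) 1) := by
  have hcompl := End.isCompl_eigenspace_one_neg_one hS.toLin'_mul_self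
  have hiso₁ := hS.isotropic_eigenspace (μ := 1) (by norm_num)
  have heq := (J n).toBilin'.finrank_eq_of_isCompl_of_isotropic (nondegenerate_toBilin'_J n)
    hcompl hiso₁ (hS.isotropic_eigenspace (by norm_num))
  have hsum := Submodule.finrank_add_eq_of_isCompl hcompl
  rw [finrank_fintype_fun_eq_card, Fintype.card_sum, Fintype.card_fin] at hsum
  exact ⟨by omega, by simpa only [toBilin'_J_apply] using hiso₁⟩

theorem exists_isSymplectic_mul_eq_mul_Rmat (hS : IsAntiSympInv n S) :
    ∃ Q, IsSymplectic n Q ∧ S * Q = Q * Rmat n := by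
  obtain ⟨hdim, hiso₁⟩ := hS.isLagrangian_eigenspace_one
  have hiso₂ := hS.isotropic_eigenspace (μ := -1) (by norm_num)
  let b := finBasisOfFinrankEq ℝ _ hdim
  obtain ⟨y, hy⟩ := (J n).toBilin'.exists_dual_family_of_isCompl_of_isotropic
    (nondegenerate_toBilin'_J n) (End.isCompl_eigenspace_one_neg_one hS.toLin'_mul_self)
    (hS.isotropic_eigenspace (by norm_num)) hiso₂ b
  simp only [toBilin'_J_apply] at hy hiso₂
  refine ⟨(of (Sum.elim (fun i => (b i : Fin n ⊕ Fin n → ℝ)) fun j => y j))ᵀ,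
    isSymplectic_transpose_of ?_, ?_⟩
  · rintro (i | i) (j | j)
    · simpa [_root_.J] using hiso₁ _ (b i).2 _ (b j).2
    · simpa [_root_.J, one_apply] using hy i j
    · rw [symForm_comm]
      simp [_root_.J, one_apply, hy j i, eq_comm]
    · simpa [_root_.J] using hiso₂ _ (y i).2 _ (y j).2
  · rw [Rmat_eq_diagonal]
    refine mul_transpose_of_eq_transpose_of_mul_diagonal ?_
    rintro (j | j)
    · simpa using End.mem_eigenspace_iff.1 (b j).2
    · simpa using End.mem_eigenspace_iff.1 (y j).2

end IsAntiSympInv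

theorem stmt8 (n : ℕ) (φ T S : Matrix (Fin n ⊕ Fin n) (Fin n ⊕ Fin n) ℝ)
    (hφ : IsSymplectic n φ) (hT : IsAntiSympInv n T) (hS : IsAntiSympInv n S)
    (hTS : φ = T * S) :
    ∃ ψ : Matrix (Fin n ⊕ Fin n) (Fin n ⊕ Fin n) ℝ, IsSymplectic n ψ ∧
      IsSymplectic n (ψ * φ * ψ⁻¹) ∧
      ψ * φ * ψ⁻¹ = Rmat n * (ψ * φ * ψ⁻¹)⁻¹ * Rmat n := by
  obtain ⟨Q, hQ, hSQ⟩ := hS.exists_isSymplectic_mul_eq_mul_Rmat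
  have hconj : Q⁻¹ * φ * Q = (Q⁻¹ * T * Q) * Rmat n := by
    simp only [hTS, Matrix.mul_assoc, hSQ]
  refine ⟨Q⁻¹, hQ.inv, ?_, ?_⟩ <;> rw [nonsing_inv_nonsing_inv _ hQ.isUnit_det]
  · exact (hQ.inv.mul hφ).mul hQ
  · rw [hconj]
    exact mul_eq_mul_inv_mul_of_mul_self_eq_one
      (conj_nonsing_inv_mul_self_eq_one hQ.isUnit_det hT.1) (Rmat_mul_Rmat n)
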